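/- arXiv:math/0508110 — 2 statements merged into one kernel-verified Lean document; each statement's English description precedes it below -/
import Mathlib

section
/- For every w ∈ W^P, define w^∨ ∈ W^P by w^∨(i) = 2n+1−w(n+1−i) for 1 ≤ i ≤ n. Then the length ℓ(w^∨) equals |λ| = λ_1 + ⋯ + λ_n, where λ = λ(D(w)) is the strict partition corresponding to w. -/
/-- `bar n i` is the involution `i ↦ 2n+1-i` on `{1,…,2n}`, written 0-indexed on `Fin (2n)`. -/
def bar (n : ℕ) (i : Fin (2 * n)) : Fin (2 * n) :=
  ⟨2 * n - 1 - i.val, by have := i.isLt; omega⟩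

/-- The embedding of `{1,…,n}` (0-indexed: `Fin n`) into `{1,…,2n}` (0-indexed: `Fin (2n)`). -/
def emb (n : ℕ) (i : Fin n) : Fin (2 * n) :=
  ⟨i.val, by have := i.isLt; omega⟩

/-- The Weyl group of type `C_n`: permutations `w` of `{1,…,2n}` with
`w(ī) = \overline{w(i)}` for all `i`. -/
def Wgroup (n : ℕ) : Set (Equiv.Perm (Fin (2 * n))) :=
  {w | ∀ i, w (bar n i) = bar n (w i)}

/-- The set `W^P`: elements `w` of `W` with `w(1) < w(2) < ⋯ < w(n)`. -/
def WP (n : ℕ) : Set (Equiv.Perm (Fin (2 * n))) :=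
  {w | w ∈ Wgroup n ∧ ∀ i j : Fin n, i < j → w (emb n i) < w (emb n j)}

/-- The standard generators of `W`: `s_i = (i,i+1)(\overline{i+1},ī)` for `1 ≤ i ≤ n−1`
(0-indexed: `i` with `i+1 < n`), and `s_n = (n, n̄)`. -/
def gens (n : ℕ) : Set (Equiv.Perm (Fin (2 * n))) :=
  {g | (∃ i : ℕ, ∃ h : i + 1 < n,
        g = Equiv.swap (⟨i, by omega⟩ : Fin (2 * n)) (⟨i + 1, by omega⟩ : Fin (2 * n)) *
            Equiv.swap (bar n ⟨i + 1, by omega⟩) (bar n ⟨i, by omega⟩)) ∨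
      (∃ h : 0 < n,
        g = Equiv.swap (⟨n - 1, by omega⟩ : Fin (2 * n)) (bar n ⟨n - 1, by omega⟩))}

/-- The length `ℓ(w)`: the minimal number of factors in an expression of `w` as a product
of the generators. -/
noncomputable def len (n : ℕ) (w : Equiv.Perm (Fin (2 * n))) : ℕ :=
  sInf {m : ℕ | ∃ l : List (Equiv.Perm (Fin (2 * n))),
    l.length = m ∧ (∀ g ∈ l, g ∈ gens n) ∧ l.prod = w}

/-- For `w ∈ W^P`, the sequence `D(w) = (n+1−w(1), …, 2n−w(n))`, 0-indexed. -/
def Dmap (n : ℕ) (w : Equiv.Perm (Fin (2 * n))) : Fin n → ℕ :=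
  fun i => n + i.val - (w (emb n i)).val

/-- Row lengths of the upper shifted diagram: `λ_i = max(d_i − i + 1, 0)`,
0-indexed: `λ i = d i − i` (truncated natural subtraction). -/
def lam (n : ℕ) (d : Fin n → ℕ) : Fin n → ℕ :=
  fun i => d i - i.val

/-!
Write `v = w^∨`. Since `v(ī) = \overline{v(i)}`, `|λ(D(w))|` equals the weight
`Σ_{i ≤ n} max(v(i) − n, 0)`. Every generator swaps adjacent values `c − 1 ↔ c` (for some
`c > n`) together with their mirror images, and the only move that raises the weight is
`c − 1 ↦ c`, which concerns at most one `i`; so `ℓ(v)` is at least the weight. Conversely, if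
`c` is the least value `> n` of `v` on `{1,…,n}`, then neither `c − 1` nor `\overline{c}` is a
value there, so this generator keeps `v` in `W^P` and lowers the weight by one; and the only
element of `W^P` of weight zero is the identity.
-/

/-- With `n ≤ c < 2n` (0-indexed), the generator sending the value `c` to `c - 1` acts on values
by `swapVal n c`: it swaps `c - 1 ↔ c` and their mirror images `2n-1-c ↔ 2n-c`. For `c = n` the
two pairs coincide and the generator is `s_n`. -/
def swapVal (n c x : ℕ) : ℕ :=
  if x = c then c - 1 else if x = c - 1 then c
  else if x = 2 * n - 1 - c then 2 * n - c else if x = 2 * n - c then 2 * n - 1 - c else x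

section swapVal

variable {n c x y : ℕ}

lemma swapVal_self : swapVal n c c = c - 1 := if_pos rfl

lemma swapVal_lt (hc : n ≤ c) (hc2 : c < 2 * n) (hx : x < 2 * n) : swapVal n c x < 2 * n := by
  unfold swapVal; split_ifs <;> omega

lemma swapVal_swapVal (hc : n ≤ c) : swapVal n c (swapVal n c x) = x := by
  unfold swapVal; split_ifs <;> omega

lemma swapVal_bar (hc : n ≤ c) (hc2 : c < 2 * n) (hx : x < 2 * n) :
    swapVal n c (2 * n - 1 - x) = 2 * n - 1 - swapVal n c x := by
  unfold swapVal; split_ifs <;> omega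

lemma swapVal_lt_swapVal (hxy : x < y) (hx1 : x ≠ c - 1) (hx2 : x ≠ 2 * n - 1 - c) :
    swapVal n c x < swapVal n c y := by
  unfold swapVal; split_ifs <;> omega

lemma swapVal_add_one_sub_le (hc : n ≤ c) :
    swapVal n c x + 1 - n ≤ x + 1 - n + if x = c - 1 then 1 else 0 := by
  unfold swapVal; split_ifs <;> omega

end swapVal

lemma mem_gens_iff {n : ℕ} {g : Equiv.Perm (Fin (2 * n))} :
    g ∈ gens n ↔ ∃ c, n ≤ c ∧ c < 2 * n ∧ ∀ x, (g x).val = swapVal n c x.val := by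
  constructor
  · rintro (⟨i, hi, rfl⟩ | ⟨hn, rfl⟩)
    · refine ⟨2 * n - 1 - i, by omega, by omega, fun x => ?_⟩
      simp only [Equiv.Perm.mul_apply, Equiv.swap_apply_def, bar, swapVal, Fin.ext_iff]
      split_ifs <;> (try simp only at *) <;> omega
    · refine ⟨n, le_rfl, by omega, fun x => ?_⟩
      simp only [Equiv.swap_apply_def, bar, swapVal, Fin.ext_iff]
      split_ifs <;> (try simp only at *) <;> omega
  · rintro ⟨c, hc, hc2, hg⟩
    rcases hc.eq_or_lt with rfl | hlt
    · refine Or.inr ⟨by omega, Equiv.ext fun x => Fin.ext ?_⟩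
      rw [hg]
      simp only [Equiv.swap_apply_def, bar, swapVal, Fin.ext_iff]
      split_ifs <;> (try simp only at *) <;> omega
    · refine Or.inl ⟨2 * n - 1 - c, by omega, Equiv.ext fun x => Fin.ext ?_⟩
      rw [hg]
      simp only [Equiv.Perm.mul_apply, Equiv.swap_apply_def, bar, swapVal, Fin.ext_iff]
      split_ifs <;> (try simp only at *) <;> omega

lemma exists_mem_gens_swapVal {n c : ℕ} (hc : n ≤ c) (hc2 : c < 2 * n) :
    ∃ g ∈ gens n, ∀ x, (g x).val = swapVal n c x.val := by
  let f : Fin (2 * n) → Fin (2 * n) := fun x => ⟨swapVal n c x, swapVal_lt hc hc2 x.isLt⟩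
  have hf : Function.Involutive f := fun x => Fin.ext (swapVal_swapVal hc)
  exact ⟨hf.toPerm f, mem_gens_iff.2 ⟨c, hc, hc2, fun _ => rfl⟩, fun _ => rfl⟩

section swapValPerm

variable {n c : ℕ} {g : Equiv.Perm (Fin (2 * n))}

lemma mul_self_eq_one_of_swapVal (hc : n ≤ c) (hg : ∀ x, (g x).val = swapVal n c x.val) :
    g * g = 1 :=
  Equiv.ext fun x => Fin.ext <| by
    rw [Equiv.Perm.mul_apply, hg, hg, swapVal_swapVal hc, Equiv.Perm.one_apply]

lemma mem_Wgroup_of_swapVal (hc : n ≤ c) (hc2 : c < 2 * n)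
    (hg : ∀ x, (g x).val = swapVal n c x.val) : g ∈ Wgroup n := fun x =>
  Fin.ext <| by simp only [hg, bar]; exact swapVal_bar hc hc2 x.isLt

end swapValPerm

lemma mul_mem_Wgroup {n : ℕ} {u v : Equiv.Perm (Fin (2 * n))} (hu : u ∈ Wgroup n)
    (hv : v ∈ Wgroup n) : u * v ∈ Wgroup n := fun x => by
  simp only [Equiv.Perm.mul_apply, hv x, hu (v x)]

lemma emb_injective (n : ℕ) : Function.Injective (emb n) := fun i j h =>
  Fin.ext (by simpa [emb, Fin.ext_iff] using h)

/-- For `u = w^∨` this is `|λ(D(w))|`: a value `n + k` (0-indexed) of `u` on `{1,…,n}`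
contributes `k + 1`. -/
def weight (n : ℕ) (u : Equiv.Perm (Fin (2 * n))) : ℕ :=
  ∑ i : Fin n, ((u (emb n i)).val + 1 - n)

lemma weight_one (n : ℕ) : weight n 1 = 0 :=
  Finset.sum_eq_zero fun i _ => by simp only [Equiv.Perm.one_apply, emb]; omega

lemma weight_mul_le {n : ℕ} {g : Equiv.Perm (Fin (2 * n))} (hg : g ∈ gens n)
    (u : Equiv.Perm (Fin (2 * n))) : weight n (g * u) ≤ weight n u + 1 := by
  obtain ⟨c, hc, -, hg⟩ := mem_gens_iff.1 hg
  have hinj : Function.Injective fun i => u (emb n i) := u.injective.comp (emb_injective n)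
  calc weight n (g * u)
      ≤ ∑ i : Fin n, ((u (emb n i)).val + 1 - n + if (u (emb n i)).val = c - 1 then 1 else 0) :=
        Finset.sum_le_sum fun i _ => by
          rw [Equiv.Perm.mul_apply, hg]; exact swapVal_add_one_sub_le hc
    _ = weight n u + (Finset.univ.filter fun i => (u (emb n i)).val = c - 1).card := by
        rw [Finset.sum_add_distrib, Finset.sum_boole, Nat.cast_id]; rfl
    _ ≤ weight n u + 1 := by
        refine Nat.add_le_add_left (Finset.card_le_one.2 fun i hi j hj => hinj ?_) _
        simp only [Finset.mem_filter, Finset.mem_univ, true_and] at hi hj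
        exact Fin.ext (hi.trans hj.symm)

lemma weight_prod_le_length {n : ℕ} (l : List (Equiv.Perm (Fin (2 * n))))
    (hl : ∀ g ∈ l, g ∈ gens n) : weight n l.prod ≤ l.length := by
  induction l with
  | nil => simp [weight_one]
  | cons g l ih =>
    rw [List.prod_cons, List.length_cons]
    exact (weight_mul_le (hl g List.mem_cons_self) _).trans
      (Nat.add_le_add_right (ih fun g' hg' => hl g' (List.mem_cons_of_mem g hg')) 1)

section WP

variable {n : ℕ} {v : Equiv.Perm (Fin (2 * n))}

lemma val_ne_bar_val (hv : v ∈ Wgroup n) (i j : Fin n) :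
    (v (emb n j)).val ≠ 2 * n - 1 - (v (emb n i)).val := fun h => by
  have hbar : v (emb n j) = v (bar n (emb n i)) := by rw [hv]; exact Fin.ext h
  have := congrArg Fin.val (v.injective hbar)
  simp only [emb, bar] at this
  omega

lemma strictMono_of_mem_WP (hv : v ∈ WP n) : StrictMono fun i => (v (emb n i)).val :=
  fun _ _ hij => hv.2 _ _ hij

lemma exists_gens_descent (hv : v ∈ WP n) (hpos : weight n v ≠ 0) :
    ∃ g ∈ gens n, g * g = 1 ∧ g * v ∈ WP n ∧ weight n (g * v) + 1 = weight n v := by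
  obtain ⟨i, hi⟩ : ∃ i : Fin n, n ≤ (v (emb n i)).val := by
    by_contra! h
    exact hpos (Finset.sum_eq_zero fun i _ => by have := h i; omega)
  obtain ⟨i0, hi0, hmin⟩ := Finset.exists_min_image
    (Finset.univ.filter fun i => n ≤ (v (emb n i)).val) (fun i => (v (emb n i)).val)
    ⟨i, by simpa using hi⟩
  simp only [Finset.mem_filter, Finset.mem_univ, true_and] at hi0 hmin
  set c := (v (emb n i0)).val with hc_def
  have hc2 : c < 2 * n := (v (emb n i0)).isLt
  have hbar : ∀ j, (v (emb n j)).val ≠ 2 * n - 1 - c := fun j => val_ne_bar_val hv.1 i0 j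
  have hpred : ∀ j, (v (emb n j)).val ≠ c - 1 := fun j h => by
    have := hbar j
    by_cases hj : n ≤ (v (emb n j)).val
    · have := hmin j hj; omega
    · omega
  have hc_ne : ∀ j, j ≠ i0 → (v (emb n j)).val ≠ c := fun j hj h =>
    hj ((strictMono_of_mem_WP hv).injective h)
  obtain ⟨g, hg_mem, hg⟩ := exists_mem_gens_swapVal hi0 hc2
  have hgv : ∀ j, ((g * v) (emb n j)).val = swapVal n c (v (emb n j)).val := fun j => hg _
  refine ⟨g, hg_mem, mul_self_eq_one_of_swapVal hi0 hg,
    ⟨mul_mem_Wgroup (mem_Wgroup_of_swapVal hi0 hc2 hg) hv.1, fun i j hij => ?_⟩, ?_⟩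
  · rw [Fin.lt_def, hgv, hgv]
    exact swapVal_lt_swapVal (strictMono_of_mem_WP hv hij) (hpred i) (hbar i)
  · have hterm : ∀ j, (v (emb n j)).val + 1 - n =
        ((g * v) (emb n j)).val + 1 - n + if j = i0 then 1 else 0 := fun j => by
      rw [hgv]
      by_cases hj : j = i0
      · rw [hj, if_pos rfl, ← hc_def, swapVal_self]
        omega
      · have := hc_ne j hj; have := hpred j; have := hbar j
        simp only [swapVal, hj, if_false]; split_ifs <;> omega
    simp only [weight, hterm, Finset.sum_add_distrib, Finset.sum_ite_eq', Finset.mem_univ, if_true]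

lemma eq_one_of_weight_eq_zero (hv : v ∈ WP n) (h0 : weight n v = 0) : v = 1 := by
  have hlow : ∀ i, (v (emb n i)).val < n := fun i => by
    have := Finset.sum_eq_zero_iff.1 h0 i (Finset.mem_univ i)
    have := (v (emb n i)).isLt
    omega
  have hfix : ∀ x : Fin (2 * n), x.val < n → v x = x := fun x hx => by
    have hmono : StrictMono fun i : Fin n => (⟨(v (emb n i)).val, hlow i⟩ : Fin n) :=
      fun _ _ hij => strictMono_of_mem_WP hv hij
    have := congrArg Fin.val (hmono.apply_eq (x := ⟨x.val, hx⟩))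
    exact Fin.ext this
  refine Equiv.ext fun x => ?_
  by_cases hx : x.val < n
  · exact hfix x hx
  · have hbx : (bar n x).val < n := by simp only [bar]; omega
    have hbb : bar n (bar n x) = x := Fin.ext (by simp only [bar]; omega)
    rw [← hbb, hv.1, hfix _ hbx, Equiv.Perm.one_apply]

lemma exists_word_length_weight (hv : v ∈ WP n) :
    ∃ l : List (Equiv.Perm (Fin (2 * n))),
      l.length = weight n v ∧ (∀ g ∈ l, g ∈ gens n) ∧ l.prod = v := by
  induction hm : weight n v generalizing v with
  | zero => exact ⟨[], rfl, by simp, (eq_one_of_weight_eq_zero hv hm).symm⟩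
  | succ m ih =>
    obtain ⟨g, hg, hgg, hgv, hw⟩ := exists_gens_descent hv (by omega)
    obtain ⟨l, hl, hlg, hlv⟩ := ih hgv (by omega)
    refine ⟨g :: l, by simp [hl], ?_, ?_⟩
    · simpa [hg] using hlg
    · rw [List.prod_cons, hlv, ← mul_assoc, hgg, one_mul]

lemma len_eq_weight (hv : v ∈ WP n) : len n v = weight n v := by
  obtain ⟨l, hl, hlg, hlv⟩ := exists_word_length_weight hv
  refine le_antisymm (Nat.sInf_le ⟨l, hl, hlg, hlv⟩) (le_csInf ⟨_, l, hl, hlg, hlv⟩ ?_)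
  rintro _ ⟨l', rfl, hl'g, rfl⟩
  exact weight_prod_le_length l' hl'g

end WP

/-- For `w ∈ W^P` and `w^∨ ∈ W^P` defined by `w^∨(i) = 2n+1−w(n+1−i)` for `1 ≤ i ≤ n`
(0-indexed: `w^∨(i) = \overline{w(n−1−i)}`), the length `ℓ(w^∨)` equals
`|λ| = λ_1 + ⋯ + λ_n` where `λ = λ(D(w))` is the strict partition corresponding to `w`. -/
theorem len_vee_eq_weight (n : ℕ)
    (w v : Equiv.Perm (Fin (2 * n))) (hv : v ∈ WP n)
    (hvee : ∀ i : Fin n,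
      v (emb n i) = bar n (w (emb n ⟨n - 1 - i.val, by have := i.isLt; omega⟩))) :
    len n v = ∑ i : Fin n, lam n (Dmap n w) i := by
  have hbox : ∀ i : Fin n, (v (emb n i)).val + 1 - n = lam n (Dmap n w) i.rev := fun i => by
    have hrev : (⟨n - 1 - i.val, by omega⟩ : Fin n) = i.rev :=
      Fin.ext (by simp only [Fin.val_rev]; omega)
    have := (w (emb n i.rev)).isLt
    rw [hvee, hrev]
    simp only [bar, lam, Dmap, Fin.val_rev]
    omega
  rw [len_eq_weight hv, weight]
  simp only [hbox]
  exact Equiv.sum_comp Fin.revPerm _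
end

section
/- Let w, w' ∈ W^P and let β be a positive root of type C_n such that w' = w·s_β and ℓ(w') = ℓ(w) − 1. Then exactly one of the following holds: (1) there exist indices i ≠ j such that the set of boxes of D(w') equals the set of boxes of D(w) together with the two boxes (i,j) and (j,i), β = ε_i + ε_j, and (ϖ_n, β^∨) = 2; (2) there exists an index i such that the set of boxes of D(w') equals the set of boxes of D(w) together with the single diagonal box (i,i), β = 2ε_i, and (ϖ_n, β^∨) = 1. -/
/-- The boxes of a diagram `d`: the pairs `(i,j)` with `1 ≤ j ≤ d_i`
(0-indexed: `j.val < d i`). -/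
def boxes (n : ℕ) (d : Fin n → ℕ) : Set (Fin n × Fin n) :=
  {p | p.2.val < d p.1}

/-- The standard basis vector `ε_i` of `ℝ^n`. -/
def eps (n : ℕ) (i : Fin n) : Fin n → ℝ :=
  fun j => if j = i then 1 else 0

/-- The standard inner product on `ℝ^n`. -/
def inn (n : ℕ) (u v : Fin n → ℝ) : ℝ :=
  ∑ j : Fin n, u j * v j

/-- The coroot `β^∨ = 2β/(β,β)`. -/
noncomputable def coroot (n : ℕ) (β : Fin n → ℝ) : Fin n → ℝ :=
  (2 / inn n β β) • β

/-- The fundamental weight `ϖ_n = ε_1 + ⋯ + ε_n`. -/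
def varpi (n : ℕ) : Fin n → ℝ :=
  fun _ => 1

/-- `(β, s_β)` is a pair of a positive root of type `C_n` together with the corresponding
reflection in `W`: for `β = ε_i − ε_j` (`i < j`) the permutation `(i,j)(ī,j̄)`;
for `β = ε_i + ε_j` (`i < j`) the permutation `(i,j̄)(j,ī)`; for `β = 2ε_i` the
transposition `(i,ī)`. -/
def rootReflPair (n : ℕ) (β : Fin n → ℝ) (r : Equiv.Perm (Fin (2 * n))) : Prop :=
  (∃ i j : Fin n, i < j ∧ β = eps n i - eps n j ∧
      r = Equiv.swap (emb n i) (emb n j) * Equiv.swap (bar n (emb n i)) (bar n (emb n j))) ∨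
  (∃ i j : Fin n, i < j ∧ β = eps n i + eps n j ∧
      r = Equiv.swap (emb n i) (bar n (emb n j)) * Equiv.swap (emb n j) (bar n (emb n i))) ∨
  (∃ i : Fin n, β = (2 : ℝ) • eps n i ∧
      r = Equiv.swap (emb n i) (bar n (emb n i)))

open Finset Equiv

theorem Fin.val_swap_apply {M : ℕ} (u v y : Fin M) :
    (swap u v y).val = if y.val = u.val then v.val else if y.val = v.val then u.val else y.val := by
  simp only [swap_apply_def, Fin.ext_iff]
  split_ifs <;> rfl

namespace Equiv.Perm

variable {M : ℕ}

theorem exists_succ_lt_of_ne_one {w : Perm (Fin M)} (h : w ≠ 1) :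
    ∃ k : ℕ, ∃ hk : k + 1 < M, w ⟨k + 1, hk⟩ < w ⟨k, by omega⟩ := by
  by_contra! hasc
  cases M with
  | zero => exact h (Subsingleton.elim _ _)
  | succ M =>
    have hmono : StrictMono w := Fin.strictMono_iff_lt_succ.mpr fun k =>
      (hasc k.val (by omega)).lt_of_ne (w.injective.ne (by simp [Fin.ext_iff]))
    exact h (Equiv.ext fun x => congrFun hmono.eq_id x)

def numInversions (w : Perm (Fin M)) : ℕ :=
  #{p : Fin M × Fin M | p.1 < p.2 ∧ w p.2 < w p.1}

theorem numInversions_eq_sum (w : Perm (Fin M)) :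
    (numInversions w : ℤ) = ∑ p : Fin M × Fin M, if p.1 < p.2 ∧ w p.2 < w p.1 then 1 else 0 := by
  rw [numInversions, Finset.card_filter]
  push_cast
  rfl

theorem numInversions_mul_swap (w : Perm (Fin M)) {u v : Fin M} (huv : u.val + 1 = v.val) :
    (numInversions (w * swap u v) : ℤ) = numInversions w + if w u < w v then 1 else -1 := by
  set τ := swap u v
  have huv' : u ≠ v := fun h => by simp [h] at huv
  have hτ : ∀ p : Fin M × Fin M, p ≠ (u, v) → p ≠ (v, u) → (τ p.1 < τ p.2 ↔ p.1 < p.2) := by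
    rintro ⟨p, q⟩ h1 h2
    simp only [τ, swap_apply_def, Fin.lt_def, Ne, Prod.mk.injEq, Fin.ext_iff] at *
    split_ifs <;> omega
  have hreindex : (numInversions (w * τ) : ℤ) =
      ∑ p : Fin M × Fin M, if τ p.1 < τ p.2 ∧ w p.2 < w p.1 then 1 else 0 := by
    rw [numInversions_eq_sum, ← (τ.prodCongr τ).sum_comp]
    simp [τ, swap_apply_self]
  rw [hreindex, numInversions_eq_sum, ← sub_eq_iff_eq_add', ← Finset.sum_sub_distrib,
    Fintype.sum_eq_add (u, v) (v, u) (by simp [huv'])]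
  · have hlt : u < v := Fin.lt_def.mpr (by omega)
    have hne : w u ≠ w v := w.injective.ne huv'
    simp only [τ, swap_apply_left, swap_apply_right]
    rcases hne.lt_or_gt with h | h <;> simp [h, hlt, h.not_gt, hlt.not_gt]
  · rintro p ⟨h1, h2⟩
    simp [hτ p h1 h2]

end Equiv.Perm

namespace TypeC

variable {n : ℕ}

@[simp] theorem val_bar (x : Fin (2 * n)) : (bar n x).val = 2 * n - 1 - x.val := rfl

@[simp] theorem val_emb (k : Fin n) : (emb n k).val = k.val := rfl

theorem bar_bar (x : Fin (2 * n)) : bar n (bar n x) = x := by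
  ext; simp only [val_bar]; omega

/-! ### The length function -/

theorem mul_mem_Wgroup {w g : Perm (Fin (2 * n))} (hw : w ∈ Wgroup n) (hg : g ∈ Wgroup n) :
    w * g ∈ Wgroup n := fun x => by
  rw [Perm.mul_apply, Perm.mul_apply, hg, hw]

theorem mem_Wgroup_of_mem_gens {g : Perm (Fin (2 * n))} (hg : g ∈ gens n) : g ∈ Wgroup n := by
  intro x
  have := x.isLt
  rcases hg with ⟨k, hk, rfl⟩ | ⟨hn, rfl⟩ <;>
  · simp only [Perm.mul_apply, Fin.ext_iff, Fin.val_swap_apply, val_bar]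
    grind

theorem mul_self_of_mem_gens {g : Perm (Fin (2 * n))} (hg : g ∈ gens n) : g * g = 1 := by
  rcases hg with ⟨k, hk, rfl⟩ | ⟨hn, rfl⟩
  · ext x
    have := x.isLt
    simp only [Perm.mul_apply, Perm.one_apply, Fin.val_swap_apply, val_bar]
    grind
  · exact swap_mul_self _ _

theorem exists_descent_le {w : Perm (Fin (2 * n))} (hw : w ∈ Wgroup n) (h1 : w ≠ 1) :
    ∃ k : ℕ, ∃ hk : k + 1 ≤ n, w ⟨k + 1, by omega⟩ < w ⟨k, by omega⟩ := by
  obtain ⟨k, hk, hdesc⟩ := Perm.exists_succ_lt_of_ne_one h1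
  by_cases hkn : k + 1 ≤ n
  · exact ⟨k, hkn, hdesc⟩
  -- reflect the descent at `k` through `bar` to the first half
  refine ⟨2 * n - 2 - k, by omega, ?_⟩
  have e1 : (⟨2 * n - 2 - k + 1, by omega⟩ : Fin (2 * n)) = bar n ⟨k, by omega⟩ := by
    ext; simp only [val_bar]; omega
  have e2 : (⟨2 * n - 2 - k, by omega⟩ : Fin (2 * n)) = bar n ⟨k + 1, hk⟩ := by
    ext; simp only [val_bar]; omega
  rw [e1, e2, hw, hw, Fin.lt_def, val_bar, val_bar]
  rw [Fin.lt_def] at hdesc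
  omega

-- The values `≥ n` play the role of the negative letters of a signed permutation.
def negatives (n : ℕ) (w : Perm (Fin (2 * n))) : ℕ :=
  #{p : Fin (2 * n) | p.val < n ∧ n ≤ (w p).val}

theorem val_swap_apply_lt_iff {u v : Fin (2 * n)} (huv : u.val < n ↔ v.val < n) (p : Fin (2 * n)) :
    (swap u v p).val < n ↔ p.val < n := by
  rw [swap_apply_def]
  split_ifs with h1 h2
  · rw [h1, huv]
  · rw [h2, huv]
  · rfl

theorem negatives_mul_of_lt_iff (w σ : Perm (Fin (2 * n)))
    (hσ : ∀ p, (σ p).val < n ↔ p.val < n) : negatives n (w * σ) = negatives n w :=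
  Finset.card_equiv σ fun p => by
    rw [Finset.mem_filter, Finset.mem_filter, hσ]; simp

theorem negatives_mul_swap_middle (w : Perm (Fin (2 * n))) {u v : Fin (2 * n)}
    (hu : u.val + 1 = n) (hv : v.val = n) :
    (negatives n (w * swap u v) : ℤ) =
      negatives n w + ((if n ≤ (w v).val then 1 else 0) - if n ≤ (w u).val then 1 else 0) := by
  simp only [negatives, Finset.card_filter, Nat.cast_sum, Nat.cast_ite, Nat.cast_one,
    Nat.cast_zero, ← sub_eq_iff_eq_add', ← Finset.sum_sub_distrib]
  rw [Fintype.sum_eq_single u]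
  · have hun : u.val < n := by omega
    simp [hun]
  · intro p hp
    by_cases hpn : p.val < n
    · have hpv : p ≠ v := fun h => by rw [h, hv] at hpn; omega
      simp [swap_apply_of_ne_of_ne hp hpv]
    · simp [hpn]

def doubleLength (n : ℕ) (w : Perm (Fin (2 * n))) : ℕ := w.numInversions + negatives n w

theorem doubleLength_one : doubleLength n 1 = 0 := by
  simp only [doubleLength, Perm.numInversions, negatives, Perm.one_apply, Nat.add_eq_zero_iff,
    Finset.card_eq_zero]
  exact ⟨Finset.filter_eq_empty_iff.mpr fun p _ h => lt_asymm h.1 h.2,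
    Finset.filter_eq_empty_iff.mpr fun p _ h => h.2.not_gt h.1⟩

theorem doubleLength_mul_swap_swap (w : Perm (Fin (2 * n))) {u v c d : Fin (2 * n)}
    (huv : u.val + 1 = v.val) (hv : v.val < n) (hcd : c.val + 1 = d.val) (hc : n ≤ c.val) :
    (doubleLength n (w * (swap u v * swap c d)) : ℤ) =
      doubleLength n w + (if w u < w v then 1 else -1) + (if w c < w d then 1 else -1) := by
  have hc' : swap u v c = c := swap_apply_of_ne_of_ne (by grind) (by grind)
  have hd' : swap u v d = d := swap_apply_of_ne_of_ne (by grind) (by grind)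
  have i1 := Perm.numInversions_mul_swap w huv
  have i2 := Perm.numInversions_mul_swap (w * swap u v) hcd
  have m1 := negatives_mul_of_lt_iff w _ (val_swap_apply_lt_iff (u := u) (v := v) (by omega))
  have m2 := negatives_mul_of_lt_iff (w * swap u v) _
    (val_swap_apply_lt_iff (u := c) (v := d) (by omega))
  simp only [Perm.mul_apply, hc', hd'] at i2
  rw [doubleLength, doubleLength, ← mul_assoc, m2, m1]
  push_cast
  linarith

theorem doubleLength_mul_swap_middle (w : Perm (Fin (2 * n))) {u v : Fin (2 * n)}
    (hu : u.val + 1 = n) (hv : v.val = n) :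
    (doubleLength n (w * swap u v) : ℤ) = doubleLength n w + (if w u < w v then 1 else -1) +
      ((if n ≤ (w v).val then 1 else 0) - if n ≤ (w u).val then 1 else 0) := by
  have i1 := Perm.numInversions_mul_swap w (u := u) (v := v) (by omega)
  have m1 := negatives_mul_swap_middle w hu hv
  rw [doubleLength, doubleLength]
  push_cast
  linarith

theorem doubleLength_mul_le_of_mem_gens (w : Perm (Fin (2 * n))) {g : Perm (Fin (2 * n))}
    (hg : g ∈ gens n) : doubleLength n (w * g) ≤ doubleLength n w + 2 := by
  rcases hg with ⟨k, hk, rfl⟩ | ⟨hn, rfl⟩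
  · have := doubleLength_mul_swap_swap w (u := ⟨k, by omega⟩) (v := ⟨k + 1, by omega⟩)
      (c := bar n ⟨k + 1, by omega⟩) (d := bar n ⟨k, by omega⟩) rfl hk
      (by simp only [val_bar]; omega) (by simp only [val_bar]; omega)
    split_ifs at this <;> omega
  · have := doubleLength_mul_swap_middle w (u := ⟨n - 1, by omega⟩)
      (v := bar n ⟨n - 1, by omega⟩) (by simp only; omega) (by simp only [val_bar]; omega)
    split_ifs at this <;> omega

theorem exists_mem_gens_doubleLength_mul_add_two {w : Perm (Fin (2 * n))} (hw : w ∈ Wgroup n)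
    (h1 : w ≠ 1) : ∃ g ∈ gens n, doubleLength n (w * g) + 2 = doubleLength n w := by
  obtain ⟨k, hk, hdesc⟩ := exists_descent_le hw h1
  have hasc : ¬ w ⟨k, by omega⟩ < w ⟨k + 1, by omega⟩ := hdesc.not_gt
  rcases hk.lt_or_eq with hk | hk
  · refine ⟨_, Or.inl ⟨k, hk, rfl⟩, ?_⟩
    have := doubleLength_mul_swap_swap w (u := ⟨k, by omega⟩) (v := ⟨k + 1, by omega⟩)
      (c := bar n ⟨k + 1, by omega⟩) (d := bar n ⟨k, by omega⟩) rfl hk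
      (by simp only [val_bar]; omega) (by simp only [val_bar]; omega)
    have hasc' : ¬ w (bar n ⟨k + 1, by omega⟩) < w (bar n ⟨k, by omega⟩) := by
      rw [hw, hw, Fin.lt_def, val_bar, val_bar]
      rw [Fin.lt_def] at hdesc
      omega
    rw [if_neg hasc, if_neg hasc'] at this
    omega
  · refine ⟨_, Or.inr ⟨by omega, rfl⟩, ?_⟩
    have hu : (⟨n - 1, by omega⟩ : Fin (2 * n)) = ⟨k, by omega⟩ := by ext; simp only; omega
    have hv : bar n ⟨n - 1, by omega⟩ = ⟨k + 1, by omega⟩ := by ext; simp only [val_bar]; omega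
    rw [hv, hu]
    have := doubleLength_mul_swap_middle w (u := ⟨k, by omega⟩) (v := ⟨k + 1, by omega⟩)
      (by simp only; omega) (by simp only; omega)
    rw [if_neg hasc] at this
    -- `w (k+1) = bar (w k)`, so the descent puts `w k` in the upper half and `w (k+1)` in the lower
    have hsym : (w ⟨k + 1, by omega⟩).val = 2 * n - 1 - (w ⟨k, by omega⟩).val := by
      rw [← hv, hw, val_bar, hu]
    rw [Fin.lt_def] at hdesc
    split_ifs at this <;> omega

theorem doubleLength_prod_le {l : List (Perm (Fin (2 * n)))} (hl : ∀ g ∈ l, g ∈ gens n) :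
    doubleLength n l.prod ≤ 2 * l.length := by
  induction l using List.reverseRecOn with
  | nil => simp [doubleLength_one]
  | append_singleton l g ih =>
    have := doubleLength_mul_le_of_mem_gens l.prod (hl g (by simp))
    have := ih fun g' hg' => hl g' (by simp [hg'])
    simp only [List.prod_append, List.prod_singleton, List.length_append, List.length_singleton]
    omega

theorem exists_word_two_mul_length_eq {w : Perm (Fin (2 * n))} (hw : w ∈ Wgroup n) :
    ∃ l : List (Perm (Fin (2 * n))),
      (∀ g ∈ l, g ∈ gens n) ∧ l.prod = w ∧ 2 * l.length = doubleLength n w := by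
  induction hN : doubleLength n w using Nat.strong_induction_on generalizing w with
  | _ N ih =>
    by_cases h1 : w = 1
    · subst h1
      exact ⟨[], by simp, rfl, by simp [← hN, doubleLength_one]⟩
    obtain ⟨g, hg, hdesc⟩ := exists_mem_gens_doubleLength_mul_add_two hw h1
    obtain ⟨l, hl, hprod, hlen⟩ :=
      ih _ (by omega) (mul_mem_Wgroup hw (mem_Wgroup_of_mem_gens hg)) rfl
    refine ⟨l ++ [g], ?_, ?_, ?_⟩
    · simpa [or_imp, forall_and] using ⟨hl, hg⟩
    · rw [List.prod_append, List.prod_singleton, hprod, mul_assoc, mul_self_of_mem_gens hg,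
        mul_one]
    · simp only [List.length_append, List.length_singleton]
      omega

theorem two_mul_len {w : Perm (Fin (2 * n))} (hw : w ∈ Wgroup n) :
    2 * len n w = doubleLength n w := by
  obtain ⟨l, hl, hprod, hlen⟩ := exists_word_two_mul_length_eq hw
  have hle : len n w ≤ l.length := Nat.sInf_le ⟨l, rfl, hl, hprod⟩
  obtain ⟨l₀, hl₀, hgens₀, hprod₀⟩ : len n w ∈ {m | ∃ l : List (Perm (Fin (2 * n))),
      l.length = m ∧ (∀ g ∈ l, g ∈ gens n) ∧ l.prod = w} :=
    Nat.sInf_mem ⟨l.length, l, rfl, hl, hprod⟩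
  have := doubleLength_prod_le hgens₀
  rw [hprod₀, hl₀] at this
  omega

/-! ### Windows of elements of `W^P` -/

def window (n : ℕ) (w : Perm (Fin (2 * n))) (k : Fin n) : ℕ := (w (emb n k)).val

def highPairs (n : ℕ) (f : Fin n → ℕ) : Finset (Fin n × Fin n) := {p | 2 * n ≤ f p.1 + f p.2}

def highEntries (n : ℕ) (f : Fin n → ℕ) : Finset (Fin n) := {k | n ≤ f k}

@[simp] theorem mem_highPairs {f : Fin n → ℕ} {p : Fin n × Fin n} :
    p ∈ highPairs n f ↔ 2 * n ≤ f p.1 + f p.2 := by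
  simp [highPairs]

@[simp] theorem mem_highEntries {f : Fin n → ℕ} {k : Fin n} : k ∈ highEntries n f ↔ n ≤ f k := by
  simp [highEntries]

theorem window_lt (w : Perm (Fin (2 * n))) (k : Fin n) : window n w k < 2 * n := (w _).isLt

theorem window_strictMono {w : Perm (Fin (2 * n))} (hw : w ∈ WP n) : StrictMono (window n w) :=
  fun k l h => hw.2 k l h

theorem window_add_window_ne {w : Perm (Fin (2 * n))} (hw : w ∈ Wgroup n) (k l : Fin n) :
    window n w k + window n w l ≠ 2 * n - 1 := by
  intro h
  have hkl : w (emb n k) = w (bar n (emb n l)) := by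
    rw [hw]; ext; simp only [window, val_bar] at h ⊢; omega
  have := congrArg Fin.val (w.injective hkl)
  simp only [val_emb, val_bar] at this
  omega

theorem exists_window_eq {w : Perm (Fin (2 * n))} (hw : w ∈ Wgroup n) (x : Fin (2 * n)) :
    ∃ k : Fin n, window n w k = x.val ∨ window n w k = 2 * n - 1 - x.val := by
  set y := w.symm x
  by_cases hy : y.val < n
  · exact ⟨⟨y.val, hy⟩, Or.inl (by simp [window, emb, y])⟩
  · refine ⟨⟨2 * n - 1 - y.val, by omega⟩, Or.inr ?_⟩
    have : emb n ⟨2 * n - 1 - y.val, by omega⟩ = bar n y := rfl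
    rw [window, this, hw, val_bar, Equiv.apply_symm_apply]

theorem apply_lt_apply_of_mem_WP {w : Perm (Fin (2 * n))} (hw : w ∈ WP n) {s t : Fin (2 * n)}
    (hst : s < t) (h : t.val < n ∨ n ≤ s.val) : w s < w t := by
  rw [Fin.lt_def] at hst
  rcases h with ht | hs
  · exact hw.2 ⟨s.val, by omega⟩ ⟨t.val, ht⟩ (Fin.lt_def.mpr hst)
  · have := hw.2 ⟨2 * n - 1 - t.val, by omega⟩ ⟨2 * n - 1 - s.val, by omega⟩
      (Fin.lt_def.mpr (by simp only; omega))
    have hs' : emb n ⟨2 * n - 1 - s.val, by omega⟩ = bar n s := rfl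
    have ht' : emb n ⟨2 * n - 1 - t.val, by omega⟩ = bar n t := rfl
    rw [hs', ht', hw.1, hw.1, Fin.lt_def, val_bar, val_bar] at this
    have := (w s).isLt
    rw [Fin.lt_def]
    omega

theorem numInversions_eq_card_highPairs {w : Perm (Fin (2 * n))} (hw : w ∈ WP n) :
    w.numInversions = #(highPairs n (window n w)) := by
  symm
  refine Finset.card_bij (fun p _ => (emb n p.1, bar n (emb n p.2))) ?_ ?_ ?_
  · rintro ⟨p, q⟩ hpq
    simp only [mem_highPairs, window, Finset.mem_filter, Finset.mem_univ, true_and] at hpq ⊢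
    rw [hw.1, Fin.lt_def, Fin.lt_def, val_bar, val_bar, val_emb, val_emb]
    have := (w (emb n q)).isLt
    have := p.isLt
    omega
  · rintro ⟨p, q⟩ _ ⟨p', q'⟩ _ h
    simp only [Prod.mk.injEq, Fin.ext_iff, val_bar, val_emb] at h ⊢
    omega
  · rintro ⟨s, t⟩ hst
    simp only [Finset.mem_filter, Finset.mem_univ, true_and] at hst
    obtain ⟨hlt, hinv⟩ := hst
    have hs : s.val < n := by
      by_contra hs
      exact (apply_lt_apply_of_mem_WP hw hlt (Or.inr (by omega))).not_gt hinv
    have ht : n ≤ t.val := by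
      by_contra ht
      exact (apply_lt_apply_of_mem_WP hw hlt (Or.inl (by omega))).not_gt hinv
    have hs' : emb n ⟨s.val, hs⟩ = s := rfl
    have ht' : emb n ⟨2 * n - 1 - t.val, by omega⟩ = bar n t := rfl
    refine ⟨(⟨s.val, hs⟩, ⟨2 * n - 1 - t.val, by omega⟩), ?_, ?_⟩
    · simp only [mem_highPairs, window, hs', ht']
      rw [hw.1, val_bar]
      rw [Fin.lt_def] at hinv
      omega
    · simp only [hs', ht', bar_bar]

theorem negatives_eq_card_highEntries (w : Perm (Fin (2 * n))) :
    negatives n w = #(highEntries n (window n w)) := by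
  symm
  refine Finset.card_bij (fun k _ => emb n k) ?_ ?_ ?_
  · intro k hk
    simp only [mem_highEntries, window, Finset.mem_filter, Finset.mem_univ, true_and] at hk ⊢
    exact ⟨k.isLt, hk⟩
  · intro k _ l _ h
    simpa [Fin.ext_iff] using h
  · intro p hp
    simp only [Finset.mem_filter, Finset.mem_univ, true_and] at hp
    exact ⟨⟨p.val, hp.1⟩, mem_highEntries.mpr hp.2, rfl⟩

theorem doubleLength_eq_of_mem_WP {w : Perm (Fin (2 * n))} (hw : w ∈ WP n) :
    doubleLength n w = #(highPairs n (window n w)) + #(highEntries n (window n w)) := by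
  rw [doubleLength, numInversions_eq_card_highPairs hw, negatives_eq_card_highEntries w]

theorem doubleLength_le_of_window_le {w w' : Perm (Fin (2 * n))} (hw : w ∈ WP n) (hw' : w' ∈ WP n)
    (h : ∀ k, window n w k ≤ window n w' k) : doubleLength n w ≤ doubleLength n w' := by
  rw [doubleLength_eq_of_mem_WP hw, doubleLength_eq_of_mem_WP hw']
  gcongr <;> intro p <;> simp only [mem_highPairs, mem_highEntries]
  · have := h p.1; have := h p.2; omega
  · have := h p; omega

theorem card_highPairs_add_three_le {f g : Fin n → ℕ} (hgf : ∀ k, g k ≤ f k) {i j : Fin n}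
    (hij : i ≠ j) (hfi : n ≤ f i) (hfj : n ≤ f j) (hgii : g i + g i < 2 * n)
    (hgij : g i + g j < 2 * n) : #(highPairs n g) + 3 ≤ #(highPairs n f) := by
  have hsub : highPairs n g ∪ {(i, i), (i, j), (j, i)} ⊆ highPairs n f := by
    intro p hp
    simp only [Finset.mem_union, Finset.mem_insert, Finset.mem_singleton, mem_highPairs] at hp ⊢
    rcases hp with hp | rfl | rfl | rfl
    · have := hgf p.1; have := hgf p.2; omega
    all_goals simp only; omega
  have hdisj : Disjoint (highPairs n g) {(i, i), (i, j), (j, i)} := by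
    simp only [Finset.disjoint_insert_right, Finset.disjoint_singleton_right, mem_highPairs]
    omega
  have hcard : #({(i, i), (i, j), (j, i)} : Finset (Fin n × Fin n)) = 3 :=
    Finset.card_eq_three.mpr ⟨_, _, _, by simp [hij], by simp [hij], by simp [hij], rfl⟩
  calc #(highPairs n g) + 3 = #(highPairs n g ∪ {(i, i), (i, j), (j, i)}) := by
        rw [Finset.card_union_of_disjoint hdisj, hcard]
    _ ≤ #(highPairs n f) := Finset.card_le_card hsub

-- The entries strictly between positions `i` and `j` represent, one per pair `{x, 2n-1-x}`,
-- exactly the pairs with `a < x < n`, where `a` is the entry at `i`.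
theorem val_add_window_eq_of_window_add_window_eq {w : Perm (Fin (2 * n))} (hw : w ∈ WP n)
    {i j : Fin n} (hij : i < j) (hsum : window n w i + window n w j = 2 * n) :
    j.val + window n w i = n + i.val := by
  have hmono := window_strictMono hw
  have hcard : #(Ioo i j) = #(Ioo (window n w i) n) := by
    refine Finset.card_bij (fun k _ => min (window n w k) (2 * n - 1 - window n w k)) ?_ ?_ ?_
    · intro k hk
      rw [Finset.mem_Ioo] at hk ⊢
      have := hmono hk.1
      have := hmono hk.2
      have := window_add_window_ne hw.1 k i
      omega
    · intro k _ l _ hkl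
      have := window_add_window_ne hw.1 k l
      have := window_lt w k
      have := window_lt w l
      exact hmono.injective (by omega)
    · intro x hx
      rw [Finset.mem_Ioo] at hx
      have := hmono hij
      obtain ⟨k, hk⟩ := exists_window_eq hw.1 ⟨x, by omega⟩
      simp only at hk
      refine ⟨k, Finset.mem_Ioo.mpr ⟨hmono.lt_iff_lt.mp ?_, hmono.lt_iff_lt.mp ?_⟩, ?_⟩ <;> omega
  rw [Fin.card_Ioo, Nat.card_Ioo] at hcard
  have := Fin.lt_def.mp hij
  have := hmono hij
  omega

/-! ### Reflections -/

def shortRefl (n : ℕ) (i j : Fin n) : Perm (Fin (2 * n)) :=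
  swap (emb n i) (emb n j) * swap (bar n (emb n i)) (bar n (emb n j))

def sumRefl (n : ℕ) (i j : Fin n) : Perm (Fin (2 * n)) :=
  swap (emb n i) (bar n (emb n j)) * swap (emb n j) (bar n (emb n i))

def longRefl (n : ℕ) (i : Fin n) : Perm (Fin (2 * n)) := swap (emb n i) (bar n (emb n i))

theorem window_mul_shortRefl_left (w : Perm (Fin (2 * n))) {i j : Fin n} (hij : i ≠ j) :
    window n (w * shortRefl n i j) i = window n w j := by
  have := Fin.val_ne_of_ne hij
  have : shortRefl n i j (emb n i) = emb n j := by
    ext; simp only [shortRefl, Perm.mul_apply, Fin.val_swap_apply, val_bar, val_emb]; grind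
  rw [window, Perm.mul_apply, this, window]

theorem window_mul_shortRefl_right (w : Perm (Fin (2 * n))) {i j : Fin n} (hij : i ≠ j) :
    window n (w * shortRefl n i j) j = window n w i := by
  have := Fin.val_ne_of_ne hij
  have : shortRefl n i j (emb n j) = emb n i := by
    ext; simp only [shortRefl, Perm.mul_apply, Fin.val_swap_apply, val_bar, val_emb]; grind
  rw [window, Perm.mul_apply, this, window]

theorem window_mul_sumRefl_left {w : Perm (Fin (2 * n))} (hw : w ∈ Wgroup n) {i j : Fin n}
    (hij : i ≠ j) :
    window n (w * sumRefl n i j) i = 2 * n - 1 - window n w j := by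
  have := Fin.val_ne_of_ne hij
  have : sumRefl n i j (emb n i) = bar n (emb n j) := by
    ext; simp only [sumRefl, Perm.mul_apply, Fin.val_swap_apply, val_bar, val_emb]; grind
  rw [window, Perm.mul_apply, this, hw, val_bar, window]

theorem window_mul_sumRefl_right {w : Perm (Fin (2 * n))} (hw : w ∈ Wgroup n) {i j : Fin n}
    (hij : i ≠ j) :
    window n (w * sumRefl n i j) j = 2 * n - 1 - window n w i := by
  have := Fin.val_ne_of_ne hij
  have : sumRefl n i j (emb n j) = bar n (emb n i) := by
    ext; simp only [sumRefl, Perm.mul_apply, Fin.val_swap_apply, val_bar, val_emb]; grind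
  rw [window, Perm.mul_apply, this, hw, val_bar, window]

theorem window_mul_sumRefl_of_ne (w : Perm (Fin (2 * n))) {i j k : Fin n} (hki : k ≠ i)
    (hkj : k ≠ j) : window n (w * sumRefl n i j) k = window n w k := by
  have := Fin.val_ne_of_ne hki
  have := Fin.val_ne_of_ne hkj
  have : sumRefl n i j (emb n k) = emb n k := by
    ext; simp only [sumRefl, Perm.mul_apply, Fin.val_swap_apply, val_bar, val_emb]; grind
  rw [window, Perm.mul_apply, this, window]

theorem window_mul_longRefl_self {w : Perm (Fin (2 * n))} (hw : w ∈ Wgroup n) (i : Fin n) :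
    window n (w * longRefl n i) i = 2 * n - 1 - window n w i := by
  rw [window, Perm.mul_apply, longRefl, swap_apply_left, hw, val_bar, window]

theorem window_mul_longRefl_of_ne (w : Perm (Fin (2 * n))) {i k : Fin n} (hki : k ≠ i) :
    window n (w * longRefl n i) k = window n w k := by
  have := Fin.val_ne_of_ne hki
  have : longRefl n i (emb n k) = emb n k := by
    ext; simp only [longRefl, Fin.val_swap_apply, val_bar, val_emb]; grind
  rw [window, Perm.mul_apply, this, window]

theorem mul_shortRefl_not_mem_WP {w : Perm (Fin (2 * n))} (hw : w ∈ WP n) {i j : Fin n}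
    (hij : i < j) :
    w * shortRefl n i j ∉ WP n := by
  intro hw'
  have h := window_strictMono hw' hij
  rw [window_mul_shortRefl_left w hij.ne, window_mul_shortRefl_right w hij.ne] at h
  exact (window_strictMono hw hij).asymm h

theorem window_eq_of_mul_longRefl {w : Perm (Fin (2 * n))} {i : Fin n} (hw : w ∈ WP n)
    (hw' : w * longRefl n i ∈ WP n)
    (hlen : doubleLength n (w * longRefl n i) + 2 = doubleLength n w) : window n w i = n := by
  have hi := window_mul_longRefl_self hw.1 i
  have hk : ∀ k ≠ i, window n (w * longRefl n i) k = window n w k :=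
    fun k hk => window_mul_longRefl_of_ne w hk
  have hlt := window_lt w i
  by_contra hne
  rcases lt_or_gt_of_ne hne with hlow | hhigh
  · have := doubleLength_le_of_window_le hw hw' fun k => by
      rcases eq_or_ne k i with rfl | hki
      · omega
      · rw [hk k hki]
    omega
  -- one of `n - 1`, `n` lies left of `i` in the window of `w`, above the new entry at `i`
  · obtain ⟨k, hkn⟩ := exists_window_eq hw.1 ⟨n, by omega⟩
    simp only at hkn
    have hki : k < i := (window_strictMono hw).lt_iff_lt.mp (by omega)
    have := window_strictMono hw' hki
    rw [hk k hki.ne, hi] at this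
    omega

theorem window_add_window_eq_of_mul_sumRefl {w : Perm (Fin (2 * n))} {i j : Fin n} (hij : i < j)
    (hw : w ∈ WP n) (hw' : w * sumRefl n i j ∈ WP n)
    (hlen : doubleLength n (w * sumRefl n i j) + 2 = doubleLength n w) :
    window n w i + window n w j = 2 * n := by
  set w' := w * sumRefl n i j
  have hi : window n w' i = 2 * n - 1 - window n w j := window_mul_sumRefl_left hw.1 hij.ne
  have hj : window n w' j = 2 * n - 1 - window n w i := window_mul_sumRefl_right hw.1 hij.ne
  have hk : ∀ k, k ≠ i → k ≠ j → window n w' k = window n w k :=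
    fun k hki hkj => window_mul_sumRefl_of_ne w hki hkj
  have hab := window_strictMono hw hij
  have hb := window_lt w j
  have hne := window_add_window_ne hw.1 i j
  have hge : 2 * n ≤ window n w i + window n w j := by
    by_contra hlt
    have := doubleLength_le_of_window_le hw hw' fun k => by
      by_cases hki : k = i
      · subst hki; omega
      by_cases hkj : k = j
      · subst hkj; omega
      rw [hk k hki hkj]
    omega
  have hle' : ∀ k, window n w' k ≤ window n w k := fun k => by
    by_cases hki : k = i
    · subst hki; omega
    by_cases hkj : k = j
    · subst hkj; omega
    rw [hk k hki hkj]
  have hin : window n w i < n := by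
    by_contra hin
    have hpairs := card_highPairs_add_three_le hle' hij.ne (by omega) (by omega) (by omega)
      (by omega)
    have hentries : #(highEntries n (window n w')) ≤ #(highEntries n (window n w)) :=
      Finset.card_le_card fun k => by
        simp only [mem_highEntries]; have := hle' k; omega
    rw [doubleLength_eq_of_mem_WP hw, doubleLength_eq_of_mem_WP hw'] at hlen
    omega
  -- with `a` the entry at `i`, the entry `a - 1` or its partner `2n - a` would break the
  -- monotonicity of the window of `w'`
  by_contra hgt
  obtain ⟨k, hka | hka⟩ := exists_window_eq hw.1 ⟨window n w i - 1, by omega⟩ <;>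
    simp only at hka
  · have hki : k < i := (window_strictMono hw).lt_iff_lt.mp (by omega)
    have := window_strictMono hw' hki
    rw [hk k hki.ne (hki.trans hij).ne, hi] at this
    omega
  · have hik : i < k := (window_strictMono hw).lt_iff_lt.mp (by omega)
    have hkj : k < j := (window_strictMono hw).lt_iff_lt.mp (by omega)
    have := window_strictMono hw' hkj
    rw [hk k hik.ne' hkj.ne, hj] at this
    omega

theorem boxes_update_succ (d : Fin n → ℕ) {i j : Fin n} (h : d i = j) :
    boxes n (Function.update d i (j.val + 1)) = boxes n d ∪ {(i, j)} := by
  ext ⟨p, q⟩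
  simp only [boxes, Set.mem_union, Set.mem_ofPred_eq, Set.mem_singleton_iff, Prod.mk.injEq,
    Function.update_apply]
  split_ifs with hp
  · subst hp
    rw [h, Fin.ext_iff]
    simp only [true_and]
    omega
  · simp [hp]

theorem Dmap_apply (w : Perm (Fin (2 * n))) (k : Fin n) :
    Dmap n w k = n + k.val - window n w k := rfl

theorem boxes_Dmap_mul_sumRefl {w : Perm (Fin (2 * n))} {i j : Fin n} (hij : i < j)
    (hw : w ∈ WP n) (hw' : w * sumRefl n i j ∈ WP n)
    (hlen : doubleLength n (w * sumRefl n i j) + 2 = doubleLength n w) :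
    boxes n (Dmap n (w * sumRefl n i j)) = boxes n (Dmap n w) ∪ {(i, j), (j, i)} := by
  have hsum := window_add_window_eq_of_mul_sumRefl hij hw hw' hlen
  have hji := val_add_window_eq_of_window_add_window_eq hw hij hsum
  have hDi : Dmap n w i = j := by rw [Dmap_apply]; omega
  have hDj : Dmap n w j = i := by rw [Dmap_apply]; omega
  have hD : Dmap n (w * sumRefl n i j) =
      Function.update (Function.update (Dmap n w) i (j.val + 1)) j (i.val + 1) := by
    funext k
    simp only [Function.update_apply, Dmap_apply]
    split_ifs with hkj hki
    · subst hkj; rw [window_mul_sumRefl_right hw.1 hij.ne]; omega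
    · subst hki; rw [window_mul_sumRefl_left hw.1 hij.ne]; omega
    · rw [window_mul_sumRefl_of_ne w hki hkj]
  rw [hD, boxes_update_succ _ (by rw [Function.update_of_ne hij.ne', hDj]),
    boxes_update_succ _ hDi, Set.union_assoc, Set.singleton_union]

theorem boxes_Dmap_mul_longRefl {w : Perm (Fin (2 * n))} {i : Fin n} (hw : w ∈ WP n)
    (hw' : w * longRefl n i ∈ WP n)
    (hlen : doubleLength n (w * longRefl n i) + 2 = doubleLength n w) :
    boxes n (Dmap n (w * longRefl n i)) = boxes n (Dmap n w) ∪ {(i, i)} := by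
  have hi := window_eq_of_mul_longRefl hw hw' hlen
  have hD : Dmap n (w * longRefl n i) = Function.update (Dmap n w) i (i.val + 1) := by
    funext k
    simp only [Function.update_apply, Dmap_apply]
    split_ifs with hki
    · subst hki; rw [window_mul_longRefl_self hw.1]; omega
    · rw [window_mul_longRefl_of_ne w hki]
  rw [hD, boxes_update_succ _ (by rw [Dmap_apply]; omega)]

theorem inn_varpi_coroot_eps_add_eps {i j : Fin n} (hij : i ≠ j) :
    inn n (varpi n) (coroot n (eps n i + eps n j)) = 2 := by
  simp [inn, varpi, coroot, eps, mul_add, Finset.sum_add_distrib, hij, hij.symm]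
  norm_num

theorem inn_varpi_coroot_two_smul_eps (i : Fin n) :
    inn n (varpi n) (coroot n ((2 : ℝ) • eps n i)) = 1 := by
  simp [inn, varpi, coroot, eps]

end TypeC

open TypeC

theorem chevalley_dichotomy_general (n : ℕ)
    (w w' : Equiv.Perm (Fin (2 * n))) (hw : w ∈ WP n) (hw' : w' ∈ WP n)
    (β : Fin n → ℝ) (r : Equiv.Perm (Fin (2 * n)))
    (hβr : rootReflPair n β r) (hprod : w' = w * r)
    (hlen : len n w' + 1 = len n w) :
    Xor'
      (∃ i j : Fin n, i ≠ j ∧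
        boxes n (Dmap n w') = boxes n (Dmap n w) ∪ {(i, j), (j, i)} ∧
        β = eps n i + eps n j ∧ inn n (varpi n) (coroot n β) = 2)
      (∃ i : Fin n,
        boxes n (Dmap n w') = boxes n (Dmap n w) ∪ {(i, i)} ∧
        β = (2 : ℝ) • eps n i ∧ inn n (varpi n) (coroot n β) = 1) := by
  have hdrop : doubleLength n w' + 2 = doubleLength n w := by
    have := two_mul_len hw.1
    have := two_mul_len hw'.1
    omega
  subst hprod
  rcases hβr with ⟨i, j, hij, -, rfl⟩ | ⟨i, j, hij, rfl, rfl⟩ | ⟨i, rfl, rfl⟩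
  · exact absurd hw' (mul_shortRefl_not_mem_WP hw hij)
  · have hinn := inn_varpi_coroot_eps_add_eps hij.ne
    refine Or.inl ⟨⟨i, j, hij.ne, boxes_Dmap_mul_sumRefl hij hw hw' hdrop, rfl, hinn⟩, ?_⟩
    rintro ⟨-, -, -, h⟩
    norm_num [hinn] at h
  · have hinn := inn_varpi_coroot_two_smul_eps i
    refine Or.inr ⟨⟨i, boxes_Dmap_mul_longRefl hw hw' hdrop, rfl, hinn⟩, ?_⟩
    rintro ⟨-, -, -, -, -, h⟩
    norm_num [hinn] at h

/-- Let `w, w' ∈ W^P` and let `β` be a positive root of type `C_n` with `w' = w·s_β` and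
`ℓ(w') = ℓ(w) − 1`. Then exactly one of the following holds:
(1) there are `i ≠ j` with `boxes(D(w')) = boxes(D(w)) ∪ {(i,j),(j,i)}`, `β = ε_i + ε_j`
and `(ϖ_n, β^∨) = 2`;
(2) there is `i` with `boxes(D(w')) = boxes(D(w)) ∪ {(i,i)}`, `β = 2ε_i` and
`(ϖ_n, β^∨) = 1`. -/
theorem chevalley_dichotomy (n : ℕ) (hn : 1 ≤ n)
    (w w' : Equiv.Perm (Fin (2 * n))) (hw : w ∈ WP n) (hw' : w' ∈ WP n)
    (β : Fin n → ℝ) (r : Equiv.Perm (Fin (2 * n)))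
    (hβr : rootReflPair n β r) (hprod : w' = w * r)
    (hlen : len n w' + 1 = len n w) :
    Xor'
      (∃ i j : Fin n, i ≠ j ∧
        boxes n (Dmap n w') = boxes n (Dmap n w) ∪ {(i, j), (j, i)} ∧
        β = eps n i + eps n j ∧ inn n (varpi n) (coroot n β) = 2)
      (∃ i : Fin n,
        boxes n (Dmap n w') = boxes n (Dmap n w) ∪ {(i, i)} ∧
        β = (2 : ℝ) • eps n i ∧ inn n (varpi n) (coroot n β) = 1) :=
  chevalley_dichotomy_general n w w' hw hw' β r hβr hprod hlen
end
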